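/- Let α, β be complex numbers with αβ = 1. Define λ₁ = α + β, λ₂ = α² + 1 + β², λ₃ = α³ + α + β + β³, λ₄ = α⁴ + α² + 1 + β² + β⁴, and μ = 3 + 3α² + 2α⁴ + α⁶ + 3β² + 2β⁴ + β⁶. Then (λ₃ + 2λ₁)² = 5 + 8λ₂ + 4λ₄ + μ. -/

import Mathlib

/-! The triple product coefficient is the cube of the trace, λ_{f⊗f⊗f}(p) = (α + β)³, since the
character of `V ⊗ V ⊗ V` is the cube of the character of `V`. Its square is therefore `(α + β)⁶`,
and with `αβ = 1` the binomial expansion collapses `αᵏβ⁶⁻ᵏ` to `α²ᵏ⁻⁶`, giving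
`20 + 15(α² + β²) + 6(α⁴ + β⁴) + α⁶ + β⁶`, which is the right-hand side regrouped. -/

section SatakePair

variable {R : Type*} [CommRing R] {a b : R}

theorem add_pow_three_of_mul_eq_one (h : a * b = 1) :
    (a + b) ^ 3 = (a ^ 3 + a + b + b ^ 3) + 2 * (a + b) := by
  linear_combination (3 * (a + b)) * h

theorem add_pow_six_of_mul_eq_one (h : a * b = 1) :
    (a + b) ^ 6 = 20 + 15 * (a ^ 2 + b ^ 2) + 6 * (a ^ 4 + b ^ 4) + (a ^ 6 + b ^ 6) := by
  linear_combination
    (6 * (a ^ 4 + b ^ 4) + 15 * (a ^ 2 + b ^ 2) * (a * b + 1)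
      + 20 * (a ^ 2 * b ^ 2 + a * b + 1)) * h

end SatakePair

theorem triple_product_coeff_sq_decomposition (α β : ℂ) (h : α * β = 1)
    (lam1 lam2 lam3 lam4 mu : ℂ)
    (h1 : lam1 = α + β)
    (h2 : lam2 = α ^ 2 + 1 + β ^ 2)
    (h3 : lam3 = α ^ 3 + α + β + β ^ 3)
    (h4 : lam4 = α ^ 4 + α ^ 2 + 1 + β ^ 2 + β ^ 4)
    (hmu : mu = 3 + 3 * α ^ 2 + 2 * α ^ 4 + α ^ 6 + 3 * β ^ 2 + 2 * β ^ 4 + β ^ 6) :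
    (lam3 + 2 * lam1) ^ 2 = 5 + 8 * lam2 + 4 * lam4 + mu := by
  subst h1 h2 h3 h4 hmu
  calc (α ^ 3 + α + β + β ^ 3 + 2 * (α + β)) ^ 2
      = (α + β) ^ 6 := by rw [← add_pow_three_of_mul_eq_one h]; ring
    _ = 20 + 15 * (α ^ 2 + β ^ 2) + 6 * (α ^ 4 + β ^ 4) + (α ^ 6 + β ^ 6) :=
        add_pow_six_of_mul_eq_one h
    _ = _ := by ring
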